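/- arXiv:math/0702281 — 3 statements merged into one kernel-verified Lean document; each statement's English description precedes it below -/
import Mathlib

section
/- Let w be an isometry of an ℝ-tree T. Then w is either elliptic (fixes at least one point of T) or hyperbolic (there exists a subset Ax(w) of T isometric to ℝ which is w-invariant and on which w acts as a nontrivial translation). -/
open Metric

/-- An ℝ-tree: a 0-hyperbolic metric space in which distances are realized
geodesically (for any two points and any intermediate value `r` of the distance
there is a point at distance `r` from the first and `dist x y - r` from the second). -/
def IsRTree (T : Type*) [MetricSpace T] : Prop :=
  (∀ x y z w : T, dist x y + dist z w ≤ max (dist x z + dist y w) (dist x w + dist y z)) ∧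
  (∀ x y : T, ∀ r ∈ Set.Icc (0:ℝ) (dist x y), ∃ z : T, dist x z = r ∧ dist z y = dist x y - r)

/-- The geodesic segment `[x,y]` in an ℝ-tree: the set of points between `x` and `y`. -/
def seg {T : Type*} [MetricSpace T] (x y : T) : Set T :=
  {z | dist x z + dist z y = dist x y}

/-- Translation length of a group element acting on `T`. -/
noncomputable def transLen (T : Type*) [MetricSpace T] {G : Type*} [Group G] [MulAction G T]
    (g : G) : ℝ :=
  ⨅ P : T, dist P (g • P)

section RTreeAux

variable {T : Type*} [MetricSpace T]

theorem rtree_btw_trans {a b c d : T} (h1 : dist a b + dist b c = dist a c)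
    (h2 : dist a c + dist c d = dist a d) :
    dist a b + dist b d = dist a d ∧ dist b c + dist c d = dist b d := by
  have t1 : dist a d ≤ dist a b + dist b d := dist_triangle a b d
  have t2 : dist b d ≤ dist b c + dist c d := dist_triangle b c d
  constructor <;> linarith

theorem rtree_btw_mid {a b c e : T} (h1 : dist a c + dist c e = dist a e)
    (h2 : dist c b + dist b e = dist c e) :
    dist a c + dist c b = dist a b := by
  have t1 : dist a b ≤ dist a c + dist c b := dist_triangle a c b
  have t2 : dist a e ≤ dist a b + dist b e := dist_triangle a b e
  linarith

theorem rtree_seg_dist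
    (hδ : ∀ x y z w : T, dist x y + dist z w ≤ max (dist x z + dist y w) (dist x w + dist y z))
    {x y u v : T} (hu : dist x u + dist u y = dist x y)
    (hv : dist x v + dist v y = dist x y) :
    dist u v = |dist x u - dist x v| := by
  have h := hδ u v x y
  have h2 : |dist x u - dist x v| ≤ dist u v := by
    have := abs_dist_sub_le u v x
    rwa [dist_comm u x, dist_comm v x] at this
  rcases le_max_iff.mp h with h' | h'
  · have hle : dist u v ≤ dist x u - dist x v := by
      rw [dist_comm u x] at h'; linarith
    exact le_antisymm (hle.trans (le_abs_self _)) h2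
  · have hle : dist u v ≤ dist x v - dist x u := by
      rw [dist_comm v x] at h'; linarith
    have : dist u v ≤ |dist x u - dist x v| := by
      rw [abs_sub_comm]; exact hle.trans (le_abs_self _)
    exact le_antisymm this h2

theorem rtree_median
    (hδ : ∀ x y z w : T, dist x y + dist z w ≤ max (dist x z + dist y w) (dist x w + dist y z))
    (hgeod : ∀ x y : T, ∀ r ∈ Set.Icc (0:ℝ) (dist x y),
      ∃ z : T, dist x z = r ∧ dist z y = dist x y - r)
    (x y z : T) :
    ∃ m : T, dist x m = (dist x y + dist x z - dist y z) / 2 ∧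
      dist y m = (dist x y + dist y z - dist x z) / 2 ∧
      dist z m = (dist x z + dist y z - dist x y) / 2 := by
  have hb1 : dist y z ≤ dist x y + dist x z := by
    have := dist_triangle y x z; rwa [dist_comm y x] at this
  have hb2 : dist x z ≤ dist x y + dist y z := dist_triangle x y z
  obtain ⟨m, hm1, hm2⟩ := hgeod x y ((dist x y + dist x z - dist y z) / 2)
    ⟨by linarith, by linarith⟩
  have hup : dist m z ≤ dist x z - (dist x y + dist x z - dist y z) / 2 := by
    have h := hδ m z x y
    have e1 : dist m x + dist z y = (dist x y + dist x z + dist y z) / 2 := by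
      rw [dist_comm m x, hm1, dist_comm z y]; ring
    have e2 : dist m y + dist z x = (dist x y + dist x z + dist y z) / 2 := by
      rw [hm2, dist_comm z x]; ring
    rw [e1, e2, max_self] at h
    linarith
  have hlo : dist x z - (dist x y + dist x z - dist y z) / 2 ≤ dist m z := by
    have := dist_triangle x m z
    rw [hm1] at this; linarith
  refine ⟨m, hm1, ?_, ?_⟩
  · rw [dist_comm y m, hm2]; ring
  · rw [dist_comm z m, le_antisymm hup hlo]; ring

theorem rtree_line_ext
    (hδ : ∀ x y z w : T, dist x y + dist z w ≤ max (dist x z + dist y w) (dist x w + dist y z))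
    {a b c e : T} (hab : dist a b + dist b c = dist a c)
    (hbc : dist b c + dist c e = dist b e) (hpos : 0 < dist b c) :
    dist a c + dist c e = dist a e := by
  have h := hδ a c b e
  have t := dist_triangle a c e
  rcases le_max_iff.mp h with h' | h'
  · linarith
  · rw [dist_comm c b] at h'; linarith

end RTreeAux

/-- Every isometry of an ℝ-tree is either elliptic (fixes a point) or hyperbolic
(has an invariant subset isometric to ℝ on which it acts as a nontrivial translation). -/
theorem isometry_elliptic_or_hyperbolic (T : Type*) [MetricSpace T] [Nonempty T]
    (hT : IsRTree T) (w : T ≃ᵢ T) :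
    (∃ x : T, w x = x) ∨
    (∃ f : ℝ → T, (∀ s t : ℝ, dist (f s) (f t) = |s - t|) ∧
      (w '' Set.range f = Set.range f) ∧
      ∃ τ : ℝ, τ ≠ 0 ∧ ∀ s : ℝ, w (f s) = f (s + τ)) := by
  obtain ⟨hδ, hgeod⟩ := hT
  obtain ⟨P⟩ := ‹Nonempty T›
  by_cases hfix : w P = P
  · exact Or.inl ⟨P, hfix⟩
  have hwdist : ∀ p q : T, dist (w p) (w q) = dist p q := fun p q => w.dist_eq p q
  obtain ⟨L, hL⟩ : ∃ L : ℝ, dist P (w P) = L := ⟨_, rfl⟩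
  have hL0 : 0 < L := by rw [← hL]; exact dist_pos.mpr (fun h => hfix h.symm)
  obtain ⟨a, ha⟩ : ∃ a : ℝ, (L + L - dist P (w (w P))) / 2 = a := ⟨_, rfl⟩
  have hQQ : dist (w P) (w (w P)) = L := by rw [hwdist]; exact hL
  have hPwQ : dist P (w (w P)) = 2*L - 2*a := by linarith
  have ha0 : 0 ≤ a := by
    have := dist_triangle P (w P) (w (w P)); rw [hL, hQQ] at this; linarith
  have haL : a ≤ L := by have := dist_nonneg (x := P) (y := w (w P)); linarith
  obtain ⟨Y, hY1, hY2, hY3⟩ := rtree_median hδ hgeod (w P) P (w (w P))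
  rw [dist_comm (w P) P, hL, hQQ, hPwQ] at hY1 hY2 hY3
  have hYQ : dist (w P) Y = a := by rw [hY1]; ring
  have hYP : dist P Y = L - a := by rw [hY2]; ring
  have hYwQ : dist (w (w P)) Y = L - a := by rw [hY3]; ring
  have sY : dist P Y + dist Y (w P) = dist P (w P) := by
    rw [dist_comm Y (w P), hYQ, hYP, hL]; ring
  have sY' : dist (w P) Y + dist Y (w (w P)) = dist (w P) (w (w P)) := by
    rw [dist_comm Y (w (w P)), hYQ, hYwQ, hQQ]; ring
  by_cases hcase : L ≤ 2*a
  · -- elliptic case: the midpoint of [P, wP] is fixed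
    obtain ⟨M, hM1, hM2⟩ := hgeod P (w P) (L/2)
      (by rw [hL]; exact ⟨by linarith, by linarith⟩)
    rw [hL] at hM2
    have sM : dist P M + dist M (w P) = dist P (w P) := by rw [hM1, hM2, hL]; ring
    have hwM1 : dist (w P) (w M) = L/2 := by rw [hwdist]; exact hM1
    have hwM2 : dist (w M) (w (w P)) = L - L/2 := by rw [hwdist]; exact hM2
    have swM : dist (w P) (w M) + dist (w M) (w (w P)) = dist (w P) (w (w P)) := by
      rw [hwM1, hwM2, hQQ]; ring
    have dMY : dist M Y = a - L/2 := by
      have h := rtree_seg_dist hδ sM sY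
      rw [hM1, hYP] at h
      rw [h, abs_of_nonneg (by linarith)]; ring
    have dwMY : dist (w M) Y = a - L/2 := by
      have h := rtree_seg_dist hδ swM sY'
      rw [hwM1, hYQ] at h
      rw [h, abs_of_nonpos (by linarith)]; ring
    have h4 := hδ M (w M) Y (w P)
    rw [dist_comm Y (w P), hYQ, dMY, dist_comm (w M) (w P), hwM1, hM2, dwMY] at h4
    refine Or.inl ⟨M, ?_⟩
    have h0 : dist M (w M) = 0 := by
      rcases le_max_iff.mp h4 with h' | h' <;> exact le_antisymm (by linarith) dist_nonneg
    rw [dist_comm] at h0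
    exact dist_eq_zero.mp h0
  · -- hyperbolic case
    have hlt : 2*a < L := lt_of_not_ge hcase
    obtain ⟨τ, hτdef⟩ : ∃ τ : ℝ, L - 2*a = τ := ⟨_, rfl⟩
    have hτ0 : 0 < τ := by linarith
    obtain ⟨X, hX1, hX2⟩ := hgeod P (w P) a (by rw [hL]; exact ⟨ha0, haL⟩)
    rw [hL] at hX2
    have sX : dist P X + dist X (w P) = dist P (w P) := by rw [hX1, hX2, hL]; ring
    have swX : dist (w P) (w X) + dist (w X) (w (w P)) = dist (w P) (w (w P)) := by
      rw [hwdist, hwdist, hX1, hX2, hQQ]; ring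
    have hwX1 : dist (w P) (w X) = a := by rw [hwdist]; exact hX1
    have hwXY : w X = Y := by
      have h := rtree_seg_dist hδ swX sY'
      rw [hwX1, hYQ, sub_self, abs_zero] at h
      exact dist_eq_zero.mp h
    have hXY : dist X Y = τ := by
      have h := rtree_seg_dist hδ sX sY
      rw [hX1, hYP] at h
      rw [h, abs_of_nonpos (by linarith)]; linarith
    have hτ' : dist X (w X) = τ := by rw [hwXY]; exact hXY
    -- distance from X to w (w X) is 2τ
    have hPXY : dist P X + dist X Y = dist P Y := by rw [hX1, hXY, hYP]; linarith
    have hPYwQ : dist P Y + dist Y (w (w P)) = dist P (w (w P)) := by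
      rw [dist_comm Y (w (w P)), hYP, hYwQ, hPwQ]; ring
    have hXwQ : dist X (w (w P)) = 2*L - 3*a := by
      have h := (rtree_btw_trans hPXY hPYwQ).1
      rw [hX1, hPwQ] at h; linarith
    have hYwY : dist Y (w Y) = τ := by rw [← hwXY, hwdist]; exact hτ'
    have hwQwY : dist (w (w P)) (w Y) = a := by rw [hwdist]; exact hYQ
    have hXwY : dist X (w Y) = 2*τ := by
      have h4 := hδ X (w (w P)) Y (w Y)
      rw [hXwQ, hYwY, hXY, hwQwY, hYwQ] at h4
      have hub : dist X (w Y) ≤ 2*τ := by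
        have := dist_triangle X Y (w Y); rw [hXY, hYwY] at this; linarith
      rcases le_max_iff.mp h4 with h' | h' <;> linarith
    have hX2τ : dist X (w (w X)) = 2*τ := by rw [hwXY]; exact hXwY
    -- powers of w
    have hw0 : ∀ p : T, (w^(0:ℤ)) p = p := fun _ => rfl
    have happ1 : ∀ (n : ℤ) (p : T), (w^(n+1)) p = w ((w^n) p) := by
      intro n p; rw [add_comm, zpow_one_add]; rfl
    have happ2 : ∀ (n : ℤ) (p : T), (w^(n+1)) p = (w^n) (w p) := by
      intro n p; rw [zpow_add_one]; rfl
    have hpowd : ∀ (n : ℤ) (p q : T), dist ((w^n) p) ((w^n) q) = dist p q :=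
      fun n p q => (w^n).dist_eq p q
    have hstep : ∀ n : ℤ, dist ((w^n) X) ((w^(n+1)) X) = τ := by
      intro n; rw [happ2, hpowd]; exact hτ'
    have h2step : ∀ n : ℤ, dist ((w^n) X) ((w^(n+2)) X) = 2*τ := by
      intro n
      have e : (w^(n+2)) X = (w^n) (w (w X)) := by
        rw [show n+2 = n+1+1 by ring, happ2 (n+1), happ2 n]
      rw [e, hpowd]; exact hX2τ
    have hlin : ∀ (k : ℕ) (n : ℤ), dist ((w^n) X) ((w^(n + k)) X) = k*τ := by
      intro k
      induction k using Nat.twoStepInduction with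
      | zero => intro n; simp
      | one => intro n; simpa using hstep n
      | more k ih ih1 =>
        intro n
        have B : dist ((w^n) X) ((w^(n + (k:ℤ) + 1)) X) = ((k:ℝ)+1)*τ := by
          have h := ih1 n; push_cast at h; rw [← add_assoc] at h; exact h
        have C := hstep (n + (k:ℤ))
        have D := h2step (n + (k:ℤ))
        have hab : dist ((w^n) X) ((w^(n + (k:ℤ))) X)
            + dist ((w^(n + (k:ℤ))) X) ((w^(n + (k:ℤ) + 1)) X)
            = dist ((w^n) X) ((w^(n + (k:ℤ) + 1)) X) := by
          rw [ih n, C, B]; ring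
        have hbc : dist ((w^(n + (k:ℤ))) X) ((w^(n + (k:ℤ) + 1)) X)
            + dist ((w^(n + (k:ℤ) + 1)) X) ((w^(n + (k:ℤ) + 2)) X)
            = dist ((w^(n + (k:ℤ))) X) ((w^(n + (k:ℤ) + 2)) X) := by
          have C2 := hstep (n + (k:ℤ) + 1)
          rw [show n + (k:ℤ) + 1 + 1 = n + (k:ℤ) + 2 by ring] at C2
          rw [C, C2, D]; ring
        have hpos : 0 < dist ((w^(n + (k:ℤ))) X) ((w^(n + (k:ℤ) + 1)) X) := by
          rw [C]; exact hτ0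
        have E := rtree_line_ext hδ hab hbc hpos
        push_cast
        rw [show n + ((k:ℤ) + 2) = n + (k:ℤ) + 2 by ring]
        have C2 := hstep (n + (k:ℤ) + 1)
        rw [show n + (k:ℤ) + 1 + 1 = n + (k:ℤ) + 2 by ring] at C2
        linarith [E, B, C2]
    have hlinZ : ∀ (n k : ℤ), 0 ≤ k → dist ((w^n) X) ((w^(n + k)) X) = (k:ℝ)*τ := by
      intro n k hk
      lift k to ℕ using hk
      exact_mod_cast hlin k n
    -- the parametrized segment from X to w X
    have hseg : ∀ u ∈ Set.Icc (0:ℝ) τ, ∃ z, dist X z = u ∧ dist z (w X) = τ - u := by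
      intro u hu
      have h := hgeod X (w X) u (by rw [hτ']; exact hu)
      rwa [hτ'] at h
    set g : ℝ → T := fun u => if h : u ∈ Set.Icc (0:ℝ) τ then (hseg u h).choose else X
      with hgdef
    have hg : ∀ u (hu : u ∈ Set.Icc (0:ℝ) τ),
        dist X (g u) = u ∧ dist (g u) (w X) = τ - u := by
      intro u hu
      have e : g u = (hseg u hu).choose := by simp only [hgdef]; rw [dif_pos hu]
      rw [e]; exact (hseg u hu).choose_spec
    have bseg : ∀ u (hu : u ∈ Set.Icc (0:ℝ) τ),
        dist X (g u) + dist (g u) (w X) = dist X (w X) := by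
      intro u hu
      obtain ⟨h1, h2⟩ := hg u hu
      rw [h1, h2, hτ']; ring
    have hkey0 : ∀ u v, u ∈ Set.Icc (0:ℝ) τ → v ∈ Set.Icc (0:ℝ) τ →
        dist (g u) (g v) = |u - v| := by
      intro u v hu hv
      have h := rtree_seg_dist hδ (bseg u hu) (bseg v hv)
      rwa [(hg u hu).1, (hg v hv).1] at h
    have hkey : ∀ k : ℤ, 1 ≤ k → ∀ u v : ℝ, u ∈ Set.Icc (0:ℝ) τ →
        v ∈ Set.Icc (0:ℝ) τ →
        dist (g u) ((w^k) (g v)) = (k:ℝ)*τ + v - u := by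
      intro k hk u v hu hv
      obtain ⟨hgu1, hgu2⟩ := hg u hu
      obtain ⟨hgv1, hgv2⟩ := hg v hv
      have F1 : dist X ((w^k) X) = (k:ℝ)*τ := by
        have h := hlinZ 0 k (by linarith)
        rwa [zero_add, hw0] at h
      have F2 : dist (w X) ((w^k) X) = ((k:ℝ)-1)*τ := by
        have h := hlinZ 1 (k-1) (by linarith)
        rw [show (1:ℤ) + (k-1) = k by ring] at h
        rw [show (w^(1:ℤ)) X = w X by rw [zpow_one]] at h
        push_cast at h; exact h
      have F1' : dist X ((w^(k+1)) X) = ((k:ℝ)+1)*τ := by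
        have h := hlinZ 0 (k+1) (by linarith)
        rw [zero_add, hw0] at h; push_cast at h; exact h
      have b1 : dist X (g u) + dist (g u) (w X) = dist X (w X) := bseg u hu
      have F3 : dist X (w X) + dist (w X) ((w^k) X) = dist X ((w^k) X) := by
        rw [hτ', F2, F1]; ring
      have BT1 := rtree_btw_trans b1 F3
      have F4 : dist X ((w^k) X) + dist ((w^k) X) ((w^(k+1)) X)
          = dist X ((w^(k+1)) X) := by
        rw [F1, hstep k, F1']; ring
      have BT2 := (rtree_btw_trans BT1.1 F4).2
      have e1 : dist ((w^k) X) ((w^k) (g v)) = v := by rw [hpowd]; exact hgv1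
      have e2 : dist ((w^k) (g v)) ((w^(k+1)) X) = τ - v := by
        rw [happ2, hpowd]; exact hgv2
      have b2 : dist ((w^k) X) ((w^k) (g v)) + dist ((w^k) (g v)) ((w^(k+1)) X)
          = dist ((w^k) X) ((w^(k+1)) X) := by
        rw [e1, e2, hstep k]; ring
      have FIN := rtree_btw_mid BT2 b2
      have G1 : dist (g u) ((w^k) X) = (k:ℝ)*τ - u := by
        have h := BT1.1
        rw [hgu1, F1] at h; linarith
      rw [G1, e1] at FIN
      linarith
    -- the axis
    set f : ℝ → T := fun t => (w ^ ⌊t/τ⌋) (g (t - ⌊t/τ⌋ * τ)) with hfdef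
    have hrem : ∀ t : ℝ, t - ⌊t/τ⌋ * τ ∈ Set.Icc (0:ℝ) τ :=
      fun t => ⟨Int.sub_floor_div_mul_nonneg t hτ0, (Int.sub_floor_div_mul_lt t hτ0).le⟩
    have hmain : ∀ s t : ℝ, s ≤ t → dist (f s) (f t) = t - s := by
      intro s t hst
      have hmn : ⌊s/τ⌋ ≤ ⌊t/τ⌋ := Int.floor_le_floor (by gcongr)
      have hft : f t = (w ^ ⌊s/τ⌋) ((w ^ (⌊t/τ⌋ - ⌊s/τ⌋)) (g (t - ⌊t/τ⌋ * τ))) := by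
        simp only [hfdef]
        have e : (w ^ ⌊t/τ⌋) = (w ^ ⌊s/τ⌋) * (w ^ (⌊t/τ⌋ - ⌊s/τ⌋)) := by
          rw [← zpow_add]; congr 1; ring
        rw [e]; rfl
      have hfs : f s = (w ^ ⌊s/τ⌋) (g (s - ⌊s/τ⌋ * τ)) := by simp only [hfdef]
      rw [hfs, hft, hpowd]
      rcases eq_or_lt_of_le hmn with he | hlt'
      · have hrt : t - (⌊s/τ⌋:ℝ) * τ ∈ Set.Icc (0:ℝ) τ := by rw [he]; exact hrem t
        rw [← he, sub_self, hw0, hkey0 _ _ (hrem s) hrt,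
          show s - (⌊s/τ⌋:ℝ) * τ - (t - (⌊s/τ⌋:ℝ) * τ) = s - t by ring,
          abs_of_nonpos (by linarith)]
        ring
      · have hk1 : 1 ≤ ⌊t/τ⌋ - ⌊s/τ⌋ := by omega
        rw [hkey _ hk1 _ _ (hrem s) (hrem t)]
        push_cast
        ring
    have hshift : ∀ s : ℝ, w (f s) = f (s + τ) := by
      intro s
      have hdiv : (s+τ)/τ = s/τ + 1 := by field_simp
      have hfl : ⌊(s+τ)/τ⌋ = ⌊s/τ⌋ + 1 := by rw [hdiv, Int.floor_add_one]
      simp only [hfdef]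
      rw [hfl]
      rw [show s + τ - ((⌊s/τ⌋:ℤ) + 1 : ℤ) * τ = s - ⌊s/τ⌋ * τ by push_cast; ring]
      rw [happ1]
    refine Or.inr ⟨f, ?_, ?_, τ, ne_of_gt hτ0, hshift⟩
    · intro s t
      rcases le_total s t with h | h
      · rw [hmain s t h, abs_sub_comm, abs_of_nonneg (by linarith)]
      · rw [dist_comm, hmain t s h, abs_of_nonneg (by linarith)]
    · apply Set.Subset.antisymm
      · rintro _ ⟨_, ⟨s, rfl⟩, rfl⟩
        exact ⟨s + τ, (hshift s).symm⟩
      · rintro _ ⟨s, rfl⟩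
        exact ⟨f (s - τ), ⟨s - τ, rfl⟩, by rw [hshift (s - τ), sub_add_cancel]⟩
end

section
/- Let T be an ℝ-tree with an isometric G-action, let P ∈ T, and let C ≥ 0 be such that for every reduced word w = x₁…xₙ over a generating set A of G and every prefix v = x₁…xₘ, the point vP lies within distance C of the geodesic segment [P, wP]. Then for every cyclically reduced word w over A one has d(wP, P) ≤ 2C + ‖w‖_T. -/
open Metric

/-- A reduced word (as a list of letters with exponents) is cyclically reduced if its
last letter is not the inverse of its first letter. -/
def IsCyclRed {A : Type*} (l : List (A × Bool)) : Prop :=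
  ∀ x ∈ l.getLast?, ∀ y ∈ l.head?, ¬ (x.1 = y.1 ∧ x.2 = !y.2)

namespace RTreeAux

variable {A : Type*} [DecidableEq A]

/-- The "no cancellation" relation on letters. -/
def NC (a b : A × Bool) : Prop := ¬ (a.1 = b.1 ∧ a.2 = !b.2)

/-- A list with no adjacent cancelling pair admits no reduction step. -/
theorem no_step {L M : List (A × Bool)} (h : List.Chain' NC L) :
    ¬ FreeGroup.Red.Step L M := by
  intro st
  cases st with
  | @not L1 L2 x b =>
    have h2 := (List.isChain_append.mp h).2.1
    have := (List.isChain_cons_cons.mp h2).1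
    exact this ⟨rfl, by simp⟩

/-- A list with no adjacent cancelling pair is its own reduction. -/
theorem reduce_eq_self {L : List (A × Bool)} (h : List.Chain' NC L) :
    FreeGroup.reduce L = L := by
  have hr : FreeGroup.Red L (FreeGroup.reduce L) := FreeGroup.reduce.red
  rcases Relation.ReflTransGen.cases_head hr with h1 | ⟨c, hc, _⟩
  · exact h1.symm
  · exact absurd hc (no_step h)

/-- If a list fails `Chain' R`, it has an adjacent pair violating `R`. -/
theorem exists_bad_pair {R : (A × Bool) → (A × Bool) → Prop} :
    ∀ {l : List (A × Bool)}, ¬ List.Chain' R l →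
      ∃ l1 a b l2, l = l1 ++ a :: b :: l2 ∧ ¬ R a b := by
  intro l
  induction l with
  | nil => intro h; exact absurd List.isChain_nil h
  | cons a t ih =>
    intro h
    cases t with
    | nil => exact absurd (List.isChain_singleton a) h
    | cons b t' =>
      by_cases hab : R a b
      · have ht : ¬ List.Chain' R (b :: t') := by
          intro hc; exact h (List.isChain_cons_cons.mpr ⟨hab, hc⟩)
        obtain ⟨l1, x, y, l2, heq, hxy⟩ := ih ht
        exact ⟨a :: l1, x, y, l2, by rw [heq]; rfl, hxy⟩
      · exact ⟨[], a, b, t', rfl, hab⟩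

/-- The word of a free group element has no adjacent cancelling pair. -/
theorem chain'_toWord (x : FreeGroup A) : List.Chain' NC x.toWord := by
  by_contra h
  obtain ⟨l1, a, b, l2, heq, hab⟩ := exists_bad_pair h
  rw [NC, not_not] at hab
  have hb : b = (a.1, !a.2) := by
    obtain ⟨h1, h2⟩ := hab
    cases' b with b1 b2
    simp only [Prod.mk.injEq]
    constructor
    · exact h1.symm
    · simp at h2 ⊢; simp [h2]
  have : FreeGroup.reduce x.toWord = l1 ++ (a.1, a.2) :: (a.1, !a.2) :: l2 := by
    rw [FreeGroup.reduce_toWord, heq, ← hb]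
  exact FreeGroup.reduce.not this

/-- Multiplication with no cancellation at the junction concatenates words. -/
theorem toWord_mul_of_nc (x y : FreeGroup A)
    (hj : ∀ a ∈ x.toWord.getLast?, ∀ b ∈ y.toWord.head?, NC a b) :
    (x * y).toWord = x.toWord ++ y.toWord := by
  have hx : x * y = FreeGroup.mk (x.toWord ++ y.toWord) := by
    rw [← FreeGroup.mul_mk, FreeGroup.mk_toWord, FreeGroup.mk_toWord]
  rw [hx, FreeGroup.toWord_mk]
  exact reduce_eq_self (List.isChain_append.mpr
    ⟨chain'_toWord x, chain'_toWord y, hj⟩)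

/-- Powers of a cyclically reduced word concatenate. -/
theorem toWord_pow_succ (w : FreeGroup A) (hw : IsCyclRed w.toWord)
    (hne : w.toWord ≠ []) :
    ∀ n : ℕ, (w ^ (n + 1)).toWord = (w ^ n).toWord ++ w.toWord := by
  intro n
  induction n with
  | zero => simp [FreeGroup.toWord_one]
  | succ n ih =>
    have : w ^ (n + 2) = w ^ (n + 1) * w := pow_succ w (n+1)
    rw [this]
    rw [toWord_mul_of_nc]
    intro a ha b hb
    rw [ih] at ha
    rw [List.getLast?_append_of_ne_nil _ hne] at ha
    exact hw a ha b hb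

end RTreeAux

/-- If every prefix image `vP` of a reduced word `w` lies within distance `C` of the
segment `[P, wP]`, then every cyclically reduced word `w` satisfies
`d(wP, P) ≤ 2C + ‖w‖_T`. -/
theorem cyclically_reduced_dist_le (T : Type*) [MetricSpace T] (hT : IsRTree T)
    {A : Type*} [DecidableEq A] [MulAction (FreeGroup A) T]
    (hiso : ∀ g : FreeGroup A, Isometry fun x : T => g • x)
    (P : T) (C : ℝ) (hC : 0 ≤ C)
    (hBBT : ∀ w v : FreeGroup A, v.toWord <+: w.toWord →
      Metric.infDist (v • P) (seg P (w • P)) ≤ C)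
    (w : FreeGroup A) (hw : IsCyclRed w.toWord) :
    dist (w • P) P ≤ 2 * C + transLen T w := by
  have htrans_nonneg : 0 ≤ transLen T w :=
    Real.iInf_nonneg fun Q => dist_nonneg
  by_cases hw1 : w = 1
  · subst hw1
    simp only [one_smul, dist_self]
    linarith
  have hne : w.toWord ≠ [] := fun h => hw1 (FreeGroup.toWord_eq_nil_iff.mp h)
  set d : ℝ := dist (w • P) P with hd
  -- the distance moved by powers
  set D : ℕ → ℝ := fun n => dist P ((w ^ n) • P) with hD
  -- segments are nonempty
  have hsegne : ∀ y : T, (seg P y).Nonempty := fun y =>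
    ⟨P, by simp [seg]⟩
  -- step inequality
  have hstep : ∀ n : ℕ, D n + (d - 2 * C) ≤ D (n + 1) := by
    intro n
    have hpre : (w ^ n).toWord <+: (w ^ (n + 1)).toWord :=
      ⟨w.toWord, (RTreeAux.toWord_pow_succ w hw hne n).symm⟩
    have hinf := hBBT (w ^ (n + 1)) (w ^ n) hpre
    refine le_of_forall_pos_le_add ?_
    intro ε hε
    have hlt : Metric.infDist ((w ^ n) • P) (seg P ((w ^ (n + 1)) • P)) < C + ε / 2 :=
      lt_of_le_of_lt hinf (by linarith)
    obtain ⟨Q, hQ, hQd⟩ := (Metric.infDist_lt_iff (hsegne _)).mp hlt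
    have hQseg : dist P Q + dist Q ((w ^ (n + 1)) • P) = dist P ((w ^ (n + 1)) • P) := hQ
    have h1 : D n ≤ dist P Q + dist ((w ^ n) • P) Q := by
      have := dist_triangle P Q ((w ^ n) • P)
      have h' := dist_comm Q ((w ^ n) • P)
      simp only [hD]
      linarith [dist_triangle P Q ((w ^ n) • P), dist_comm Q ((w ^ n) • P)]
    have heqpt : (w ^ (n + 1)) • P = (w ^ n) • (w • P) := by
      rw [pow_succ, mul_smul]
    have h2 : dist ((w ^ n) • P) ((w ^ (n + 1)) • P) = dist P (w • P) := by
      rw [heqpt]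
      exact (hiso (w ^ n)).dist_eq P (w • P)
    have h3 : dist P (w • P) ≤ dist ((w ^ n) • P) Q + dist Q ((w ^ (n + 1)) • P) := by
      rw [← h2]
      exact dist_triangle _ _ _
    have hdc : dist P (w • P) = d := dist_comm P (w • P)
    simp only [hD] at *
    linarith
  -- linear growth
  have hgrow : ∀ n : ℕ, (n : ℝ) * (d - 2 * C) ≤ D n := by
    intro n
    induction n with
    | zero => simp [hD]
    | succ n ih =>
      have := hstep n
      push_cast
      linarith
  -- displacement of any point bounds D n
  have hbound : ∀ (Q : T) (n : ℕ), D n ≤ 2 * dist P Q + (n : ℝ) * dist Q (w • Q) := by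
    intro Q n
    have hiter : ∀ m : ℕ, dist Q ((w ^ m) • Q) ≤ (m : ℝ) * dist Q (w • Q) := by
      intro m
      induction m with
      | zero => simp
      | succ m ih =>
        have heqpt : (w ^ (m + 1)) • Q = (w ^ m) • (w • Q) := by
          rw [pow_succ, mul_smul]
        have h1 : dist Q ((w ^ (m + 1)) • Q) ≤
            dist Q ((w ^ m) • Q) + dist ((w ^ m) • Q) ((w ^ m) • (w • Q)) := by
          rw [heqpt] at *
          exact dist_triangle _ _ _
        have h2 : dist ((w ^ m) • Q) ((w ^ m) • (w • Q)) = dist Q (w • Q) :=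
          (hiso (w ^ m)).dist_eq Q (w • Q)
        push_cast
        linarith
    have h1 : D n ≤ dist P Q + dist Q ((w ^ n) • Q) + dist ((w ^ n) • Q) ((w ^ n) • P) := by
      simp only [hD]
      calc dist P ((w ^ n) • P) ≤ dist P ((w ^ n) • Q) + dist ((w ^ n) • Q) ((w ^ n) • P) :=
            dist_triangle _ _ _
        _ ≤ dist P Q + dist Q ((w ^ n) • Q) + dist ((w ^ n) • Q) ((w ^ n) • P) := by
            linarith [dist_triangle P Q ((w ^ n) • Q)]
    have h2 : dist ((w ^ n) • Q) ((w ^ n) • P) = dist Q P :=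
      (hiso (w ^ n)).dist_eq Q P
    have h3 := dist_comm Q P
    linarith [hiter n]
  -- conclude d - 2C ≤ dist Q (w Q) for every Q
  have hkey : ∀ Q : T, d - 2 * C ≤ dist Q (w • Q) := by
    intro Q
    by_contra h
    push_neg at h
    set a := d - 2 * C
    set c := dist Q (w • Q)
    set b := 2 * dist P Q
    have hb : 0 ≤ b := by positivity
    have hac : 0 < a - c := by simp only [a, c] at *; linarith
    obtain ⟨n, hn⟩ := exists_nat_gt (b / (a - c))
    have h1 : (n : ℝ) * a ≤ b + (n : ℝ) * c := le_trans (hgrow n) (hbound Q n)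
    have h2 : b < (n : ℝ) * (a - c) := (div_lt_iff₀ hac).mp hn
    nlinarith
  haveI : Nonempty T := ⟨P⟩
  have hfin : d - 2 * C ≤ transLen T w := le_ciInf hkey
  linarith
end

section
/- Let T be an ℝ-tree with an isometric action of the free group F(A), let P ∈ T, and suppose BBT(A,P) = C, i.e. for every reduced word w over A and every prefix v of w, the point vP lies within distance C of the segment [P, wP]. Then for every cyclically reduced word w over A and every subword u of w, one has d(uP, P) ≤ 2C + ‖w‖_T. -/
open Metric

/-!
Write `w = p u s` and rotate it to `g = u s p`: this word is cyclically reduced and conjugate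
to `w`, so it has the same translation length, and the reduced words of its powers are plain
concatenations, so that `g ^ a` and `u` are prefixes of powers of `g`. By BBT the sequence
`D n = d(P, g ^ n P)` is superadditive up to `2C`; together with the linear bound
`D n ≤ 2 d(P, Q) + n d(Q, g Q)` this gives `D n ≤ n ‖g‖ + 2C`. The four-point condition for
`uP, P, gP, g ^ (n + 1) P`, with `uP` close to both segments `[P, gP]` and `[P, g ^ (n + 1) P]`,
gives `D (n + 1) - D n ≥ 2 d(uP, P) - D 1 - 2C`, and comparing the growth rates of `D` yields
the bound.
-/
theorem nonpos_of_forall_nat_mul_le {x K : ℝ} (h : ∀ n : ℕ, n * x ≤ K) : x ≤ 0 := by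
  by_contra! hx
  obtain ⟨n, hn⟩ := exists_nat_gt (K / x)
  have := h n
  rw [div_lt_iff₀ hx] at hn
  linarith

theorem le_nat_mul_add_of_superadditive {D : ℕ → ℝ} {c K l : ℝ}
    (hsup : ∀ a b, D a + D b ≤ D (a + b) + c) (hle : ∀ n, D n ≤ K + n * l) (n : ℕ) :
    D n ≤ n * l + c := by
  have hmul : ∀ m : ℕ, (m + 1) * D n ≤ D (n * (m + 1)) + m * c := by
    intro m
    induction m with
    | zero => simp
    | succ m ih =>
      have := hsup (n * (m + 1)) n
      rw [show n * (m + 1) + n = n * (m + 1 + 1) by ring] at this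
      push_cast
      linarith
  suffices D n - n * l - c ≤ 0 by linarith
  refine nonpos_of_forall_nat_mul_le (K := K - c - (D n - n * l - c)) fun m => ?_
  have h1 := hmul m
  have h2 := hle (n * (m + 1))
  push_cast at h2
  linarith

theorem le_add_of_two_mul_add_le_succ {D : ℕ → ℝ} {c l L : ℝ} (hD0 : D 0 = 0)
    (hle : ∀ n, D n ≤ n * l + c) (hstep : ∀ j, 2 * L + D j ≤ D 1 + D (j + 1) + c) :
    L ≤ l + c := by
  have hlow : ∀ n : ℕ, n * (2 * L - D 1 - c) ≤ D n := by
    intro n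
    induction n with
    | zero => simp [hD0]
    | succ n ih => push_cast; linarith [hstep n]
  suffices 2 * L - 2 * l - 2 * c ≤ 0 by linarith
  refine nonpos_of_forall_nat_mul_le (K := c) fun n => ?_
  have hD1 : n * D 1 ≤ n * (l + c) :=
    mul_le_mul_of_nonneg_left (by simpa using hle 1) n.cast_nonneg
  linarith [hle n, hlow n]

theorem dist_add_dist_le_of_infDist_seg_le {T : Type*} [MetricSpace T] {x y z : T} {C : ℝ}
    (h : infDist z (seg x y) ≤ C) : dist x z + dist z y ≤ dist x y + 2 * C := by
  refine le_of_forall_pos_le_add fun ε hε => ?_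
  obtain ⟨q, hq, hzq⟩ := (infDist_lt_iff ⟨x, by simp [seg]⟩).1
    (h.trans_lt (lt_add_of_pos_right C (half_pos hε)))
  have hq' : dist x q + dist q y = dist x y := hq
  linarith [dist_triangle x q z, dist_triangle z q y, dist_comm z q]

theorem IsRTree.two_mul_dist_add_dist_le {T : Type*} [MetricSpace T] (hT : IsRTree T)
    {p x a b : T} {c : ℝ} (ha : dist p x + dist x a ≤ dist p a + c)
    (hb : dist p x + dist x b ≤ dist p b + c) :
    2 * dist x p + dist a b ≤ dist p a + dist p b + c := by
  rcases le_max_iff.1 (hT.1 x p a b) with h | h <;> linarith [dist_comm x p]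

section IsometricAction

variable {G T : Type*} [Group G] [MetricSpace T] [MulAction G T]

theorem dist_pow_smul_self_le (hiso : ∀ g : G, Isometry fun x : T => g • x) (g : G) (Q : T)
    (n : ℕ) : dist Q (g ^ n • Q) ≤ n * dist Q (g • Q) := by
  induction n with
  | zero => simp
  | succ n ih =>
    calc dist Q (g ^ (n + 1) • Q) ≤ dist Q (g • Q) + dist (g • Q) (g • g ^ n • Q) := by
          rw [pow_succ', mul_smul]; exact dist_triangle _ _ _
      _ = dist Q (g • Q) + dist Q (g ^ n • Q) := by rw [(hiso g).dist_eq]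
      _ ≤ (n + 1 : ℕ) * dist Q (g • Q) := by push_cast; linarith

theorem dist_pow_smul_le (hiso : ∀ g : G, Isometry fun x : T => g • x) (g : G) (P Q : T)
    (n : ℕ) : dist P (g ^ n • P) ≤ 2 * dist P Q + n * dist Q (g • Q) := by
  have h := dist_triangle4 P Q (g ^ n • Q) (g ^ n • P)
  rw [(hiso _).dist_eq, dist_comm Q P] at h
  linarith [dist_pow_smul_self_le hiso g Q n]

theorem transLen_conj (hiso : ∀ g : G, Isometry fun x : T => g • x) (k g : G) :
    transLen T (k * g * k⁻¹) = transLen T g := by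
  unfold transLen
  rw [← (MulAction.toPerm k : Equiv.Perm T).iInf_comp]
  congr 1 with Q
  simp [mul_smul, (hiso k).dist_eq]

theorem dist_pow_smul_le_nat_mul_transLen_add (hiso : ∀ g : G, Isometry fun x : T => g • x)
    {g : G} {P : T} {c : ℝ}
    (hsup : ∀ a b : ℕ, dist P (g ^ a • P) + dist P (g ^ b • P) ≤ dist P (g ^ (a + b) • P) + c)
    (n : ℕ) : dist P (g ^ n • P) ≤ n * transLen T g + c := by
  have hQ (Q : T) : dist P (g ^ n • P) - c ≤ n * dist Q (g • Q) := by
    linarith [le_nat_mul_add_of_superadditive hsup (dist_pow_smul_le hiso g P Q) n]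
  have : Nonempty T := ⟨P⟩
  rw [transLen, Real.mul_iInf_of_nonneg n.cast_nonneg]
  linarith [le_ciInf hQ]

theorem dist_le_two_mul_add_transLen_of_infDist_seg_le (hT : IsRTree T)
    (hiso : ∀ g : G, Isometry fun x : T => g • x) {g : G} {P x : T} {C : ℝ}
    (hpow : ∀ a b : ℕ, infDist (g ^ a • P) (seg P (g ^ (a + b) • P)) ≤ C)
    (hx : ∀ n : ℕ, infDist x (seg P (g ^ (n + 1) • P)) ≤ C) :
    dist x P ≤ 2 * C + transLen T g := by
  set D : ℕ → ℝ := fun n => dist P (g ^ n • P)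
  have hsup (a b : ℕ) : D a + D b ≤ D (a + b) + 2 * C := by
    have hshift : dist (g ^ a • P) (g ^ (a + b) • P) = D b := by
      rw [pow_add, mul_smul, (hiso _).dist_eq]
    linarith [dist_add_dist_le_of_infDist_seg_le (hpow a b)]
  have hstep (j : ℕ) : 2 * dist x P + D j ≤ D 1 + D (j + 1) + 2 * C := by
    have hshift : dist (g • P) (g ^ (j + 1) • P) = D j := by
      rw [pow_succ', mul_smul, (hiso g).dist_eq]
    have h := hT.two_mul_dist_add_dist_le (dist_add_dist_le_of_infDist_seg_le (hx 0))
      (dist_add_dist_le_of_infDist_seg_le (hx j))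
    rw [zero_add, pow_one, hshift] at h
    simpa [D] using h
  have := le_add_of_two_mul_add_le_succ (by simp)
    (dist_pow_smul_le_nat_mul_transLen_add hiso hsup) hstep
  linarith

end IsometricAction

theorem IsCyclRed.isCyclicallyReduced {A : Type*} {L : List (A × Bool)} (h : IsCyclRed L)
    (hL : FreeGroup.IsReduced L) : FreeGroup.IsCyclicallyReduced L :=
  ⟨hL, fun a ha b hb hab => by simpa [hab] using h a ha b hb⟩

namespace FreeGroup

variable {A : Type*}

theorem IsCyclicallyReduced.append_comm {L₁ L₂ : List (A × Bool)}
    (h : IsCyclicallyReduced (L₁ ++ L₂)) : IsCyclicallyReduced (L₂ ++ L₁) := by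
  rcases eq_or_ne L₁ [] with rfl | h₁
  · simpa using h
  rcases eq_or_ne L₂ [] with rfl | h₂
  · simpa using h
  obtain ⟨hc₁, hc₂, hlink⟩ := List.isChain_append.1 h.isReduced
  refine ⟨List.isChain_append.2 ⟨hc₂, hc₁, fun a ha b hb => ?_⟩, fun a ha b hb => ?_⟩
  · exact h.2 a (by rwa [List.getLast?_append_of_ne_nil _ h₂])
      b (by rwa [List.head?_append_of_ne_nil _ h₁])
  · exact hlink a (by rwa [List.getLast?_append_of_ne_nil _ h₁] at ha)
      b (by rwa [List.head?_append_of_ne_nil _ h₂] at hb)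

theorem toWord_mk_pow [DecidableEq A] {L : List (A × Bool)} (h : IsCyclicallyReduced L)
    (n : ℕ) : (mk L ^ n).toWord = (List.replicate n L).flatten := by
  rw [toWord_pow, toWord_mk, h.isReduced.reduce_eq, (h.flatten_replicate n).isReduced.reduce_eq]

end FreeGroup

theorem subword_dist_le_general (T : Type*) [MetricSpace T] (hT : IsRTree T)
    {A : Type*} [DecidableEq A] [MulAction (FreeGroup A) T]
    (hiso : ∀ g : FreeGroup A, Isometry fun x : T => g • x)
    (P : T) (C : ℝ)
    (hBBT : ∀ w v : FreeGroup A, v.toWord <+: w.toWord →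
      Metric.infDist (v • P) (seg P (w • P)) ≤ C)
    (w u : FreeGroup A) (hw : IsCyclRed w.toWord)
    (hu : u.toWord <:+: w.toWord) :
    dist (u • P) P ≤ 2 * C + transLen T w := by
  obtain ⟨p, s, hps⟩ := hu
  set L := u.toWord ++ s ++ p
  have hL : FreeGroup.IsCyclicallyReduced L := by
    have := hw.isCyclicallyReduced FreeGroup.isReduced_toWord
    rw [← hps, List.append_assoc] at this
    exact this.append_comm
  have hconj : w = FreeGroup.mk p * FreeGroup.mk L * (FreeGroup.mk p)⁻¹ := by
    rw [← FreeGroup.mk_toWord (x := w), ← hps, eq_mul_inv_iff_mul_eq, FreeGroup.mul_mk,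
      FreeGroup.mul_mk]
    simp [L]
  rw [hconj, transLen_conj hiso]
  refine dist_le_two_mul_add_transLen_of_infDist_seg_le hT hiso (fun a b => hBBT _ _ ?_)
    (fun n => hBBT _ _ ?_)
  · rw [FreeGroup.toWord_mk_pow hL, FreeGroup.toWord_mk_pow hL, List.replicate_add,
      List.flatten_append]
    exact List.prefix_append _ _
  · rw [FreeGroup.toWord_mk_pow hL, List.replicate_succ, List.flatten_cons, List.append_assoc,
      List.append_assoc]
    exact List.prefix_append _ _

/-- With a BBT constant `C` for `(A, P)`: for every cyclically reduced word `w` and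
every subword `u` of `w` one has `d(uP, P) ≤ 2C + ‖w‖_T`. -/
theorem subword_dist_le (T : Type*) [MetricSpace T] (hT : IsRTree T)
    {A : Type*} [DecidableEq A] [MulAction (FreeGroup A) T]
    (hiso : ∀ g : FreeGroup A, Isometry fun x : T => g • x)
    (P : T) (C : ℝ) (hC : 0 ≤ C)
    (hBBT : ∀ w v : FreeGroup A, v.toWord <+: w.toWord →
      Metric.infDist (v • P) (seg P (w • P)) ≤ C)
    (w u : FreeGroup A) (hw : IsCyclRed w.toWord)
    (hu : u.toWord <:+: w.toWord) :
    dist (u • P) P ≤ 2 * C + transLen T w :=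
  subword_dist_le_general T hT hiso P C hBBT w u hw hu
end
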